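/- arXiv:1902.03285 — 5 statements merged into one kernel-verified Lean document; each statement's English description precedes it below -/
import Mathlib

section
/- Let D and E be finite nonempty sequences of real numbers. The difference set Δ(D,E) = { avg(D[k..|D|]) − avg(E[1..l]) : 1 ≤ k ≤ |D|, 1 ≤ l ≤ |E| } is a cover if and only if the right interval of D, (min_i avg(D[i..|D|]), max_i avg(D[i..|D|])) viewed as the pair of its endpoints, and the left interval of E, (min_i avg(E[1..i]), max_i avg(E[1..i])), intersect, i.e., min of right suffixes of D ≤ max of left prefixes of E and max of right suffixes of D ≥ min of left prefixes of E. -/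
/-- The arithmetic mean of the entries `a` through `b` of a (1-indexed) sequence. -/
noncomputable def avg (D : ℕ → ℝ) (a b : ℕ) : ℝ :=
    (∑ i ∈ Finset.Icc a b, D i) / (b - a + 1 : ℕ)

/-- The difference set `Δ(D,E)` (for `D` of length `n`, `E` of length `m`) is a cover
iff the right interval of `D` and the left interval of `E` intersect. -/
theorem diffSet_cover_iff_intervals_intersect (D E : ℕ → ℝ) (n m : ℕ)
    (hn : 1 ≤ n) (hm : 1 ≤ m) :
    (∀ y : ℝ, ∃ k l, 1 ≤ k ∧ k ≤ n ∧ 1 ≤ l ∧ l ≤ m ∧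
        y * (avg D k n - avg E 1 l) ≥ 0) ↔
    ((Finset.Icc 1 n).inf' (Finset.nonempty_Icc.mpr hn) (fun k => avg D k n) ≤
        (Finset.Icc 1 m).sup' (Finset.nonempty_Icc.mpr hm) (fun l => avg E 1 l) ∧
      (Finset.Icc 1 m).inf' (Finset.nonempty_Icc.mpr hm) (fun l => avg E 1 l) ≤
        (Finset.Icc 1 n).sup' (Finset.nonempty_Icc.mpr hn) (fun k => avg D k n)) := by
  constructor
  · intro h
    constructor
    · obtain ⟨k, l, hk1, hkn, hl1, hlm, hy⟩ := h (-1)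
      have hkm : k ∈ Finset.Icc 1 n := Finset.mem_Icc.mpr ⟨hk1, hkn⟩
      have hlm' : l ∈ Finset.Icc 1 m := Finset.mem_Icc.mpr ⟨hl1, hlm⟩
      have h1 : avg D k n ≤ avg E 1 l := by nlinarith
      calc (Finset.Icc 1 n).inf' _ (fun k => avg D k n) ≤ avg D k n :=
            Finset.inf'_le _ hkm
        _ ≤ avg E 1 l := h1
        _ ≤ _ := Finset.le_sup' (fun l => avg E 1 l) hlm'
    · obtain ⟨k, l, hk1, hkn, hl1, hlm, hy⟩ := h 1
      have hkm : k ∈ Finset.Icc 1 n := Finset.mem_Icc.mpr ⟨hk1, hkn⟩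
      have hlm' : l ∈ Finset.Icc 1 m := Finset.mem_Icc.mpr ⟨hl1, hlm⟩
      have h1 : avg E 1 l ≤ avg D k n := by nlinarith
      calc (Finset.Icc 1 m).inf' _ (fun l => avg E 1 l) ≤ avg E 1 l :=
            Finset.inf'_le _ hlm'
        _ ≤ avg D k n := h1
        _ ≤ _ := Finset.le_sup' (fun k => avg D k n) hkm
  · rintro ⟨h1, h2⟩ y
    rcases le_total 0 y with hy | hy
    · obtain ⟨k, hkm, hk⟩ := Finset.exists_mem_eq_sup' (Finset.nonempty_Icc.mpr hn)
        (fun k => avg D k n)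
      obtain ⟨l, hlm, hl⟩ := Finset.exists_mem_eq_inf' (Finset.nonempty_Icc.mpr hm)
        (fun l => avg E 1 l)
      obtain ⟨hk1, hkn⟩ := Finset.mem_Icc.mp hkm
      obtain ⟨hl1, hln⟩ := Finset.mem_Icc.mp hlm
      refine ⟨k, l, hk1, hkn, hl1, hln, ?_⟩
      have : avg E 1 l ≤ avg D k n := by rw [hk] at h2; rw [hl] at h2; exact h2
      exact mul_nonneg hy (by linarith)
    · obtain ⟨k, hkm, hk⟩ := Finset.exists_mem_eq_inf' (Finset.nonempty_Icc.mpr hn)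
        (fun k => avg D k n)
      obtain ⟨l, hlm, hl⟩ := Finset.exists_mem_eq_sup' (Finset.nonempty_Icc.mpr hm)
        (fun l => avg E 1 l)
      obtain ⟨hk1, hkn⟩ := Finset.mem_Icc.mp hkm
      obtain ⟨hl1, hln⟩ := Finset.mem_Icc.mp hlm
      refine ⟨k, l, hk1, hkn, hl1, hln, ?_⟩
      have : avg D k n ≤ avg E 1 l := by rw [hk] at h1; rw [hl] at h1; exact h1
      nlinarith
end

section
/- Let D be a finite real sequence of length n and let j be a border of D that is maximal among all borders of D. Then avg(D[j..n]) = max over 1 ≤ k ≤ n of avg(D[k..n]). -/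
/-- `i` is a border of the sequence `D` of length `n`: there is an extension `F` of `D`
(of some length `m ≥ n`, agreeing with `D` on `1..n`) such that the suffix average
starting at `i` is maximal among all suffix averages of `F`. -/
def IsBorder (D : ℕ → ℝ) (n i : ℕ) : Prop :=
  1 ≤ i ∧ i ≤ n ∧ ∃ m F, n ≤ m ∧ (∀ j, 1 ≤ j → j ≤ n → F j = D j) ∧
    ∀ j, 1 ≤ j → j ≤ m → avg F j m ≤ avg F i m

lemma sum_Icc_split (F : ℕ → ℝ) {a b c : ℕ} (hab : a ≤ b) (hbc : b ≤ c) :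
    ∑ i ∈ Finset.Icc a c, F i = (∑ i ∈ Finset.Icc a b, F i) + ∑ i ∈ Finset.Icc (b+1) c, F i := by
  rw [← Finset.sum_union (by simp [Finset.disjoint_left]; omega)]
  congr 1
  ext i
  simp only [Finset.mem_Icc, Finset.mem_union]
  omega

/-- The maximal border of `D` attains the maximal suffix average. -/
theorem maximal_border_attains_max_suffix_avg (D : ℕ → ℝ) (n j : ℕ) (hn : 1 ≤ n)
    (hj : IsBorder D n j) (hmax : ∀ i, IsBorder D n i → i ≤ j) :
    avg D j n =
      (Finset.Icc 1 n).sup' (Finset.nonempty_Icc.mpr hn) (fun k => avg D k n) := by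
  obtain ⟨k, hkmem, hk⟩ := Finset.exists_mem_eq_sup' (Finset.nonempty_Icc.mpr hn)
      (fun k => avg D k n)
  obtain ⟨hk1, hk2⟩ := Finset.mem_Icc.mp hkmem
  obtain ⟨hj1, hj2, m, F, hnm, hF, hmaxF⟩ := hj
  -- k is a border
  have hkb : IsBorder D n k := by
    refine ⟨hk1, hk2, n, D, le_refl n, fun _ _ _ => rfl, fun i hi1 hi2 => ?_⟩
    have h := Finset.le_sup' (fun k => avg D k n) (Finset.mem_Icc.mpr ⟨hi1, hi2⟩ : i ∈ Finset.Icc 1 n)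
    rwa [hk] at h
  have hkj : k ≤ j := hmax k hkb
  rw [hk]
  refine le_antisymm ?_ ?_
  · have h := Finset.le_sup' (fun k => avg D k n) (Finset.mem_Icc.mpr ⟨hj1, hj2⟩ : j ∈ Finset.Icc 1 n)
    rwa [hk] at h
  rcases eq_or_lt_of_le hkj with rfl | hkj'
  · exact le_refl _
  have hsum : ∀ a b : ℕ, 1 ≤ a → b ≤ n → ∑ i ∈ Finset.Icc a b, F i = ∑ i ∈ Finset.Icc a b, D i := by
    intro a b ha hb
    refine Finset.sum_congr rfl fun i hi => ?_
    obtain ⟨h1, h2⟩ := Finset.mem_Icc.mp hi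
    exact hF i (ha.trans h1) (h2.trans hb)
  rcases eq_or_lt_of_le hnm with rfl | hmn
  · have h2 := hmaxF k hk1 hk2
    unfold avg at h2 ⊢
    rwa [hsum k n hk1 le_rfl, hsum j n hj1 le_rfl] at h2
  -- m > n
  have hsF_j : ∑ i ∈ Finset.Icc j m, F i
      = (∑ i ∈ Finset.Icc j n, D i) + ∑ i ∈ Finset.Icc (n+1) m, F i := by
    rw [sum_Icc_split F hj2 (le_of_lt hmn), hsum j n hj1 le_rfl]
  have hsF_k : ∑ i ∈ Finset.Icc k m, F i
      = (∑ i ∈ Finset.Icc k (j-1), D i) + (∑ i ∈ Finset.Icc j n, D i)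
        + ∑ i ∈ Finset.Icc (n+1) m, F i := by
    rw [sum_Icc_split F hk2 (le_of_lt hmn),
      hsum k n hk1 le_rfl, sum_Icc_split D (by omega : k ≤ j - 1) (by omega : j - 1 ≤ n),
      show j - 1 + 1 = j by omega]
  have hsD_k : ∑ i ∈ Finset.Icc k n, D i
      = (∑ i ∈ Finset.Icc k (j-1), D i) + ∑ i ∈ Finset.Icc j n, D i := by
    rw [sum_Icc_split D (by omega : k ≤ j - 1) (by omega : j - 1 ≤ n),
      show j - 1 + 1 = j by omega]
  have h1 := hmaxF (n+1) (by omega) (by omega)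
  have h2 := hmaxF k hk1 (by omega)
  unfold avg at h1 h2 ⊢
  rw [hsF_j, hsF_k] at *
  rw [hsD_k]
  set A := ∑ i ∈ Finset.Icc j n, D i with hA
  set C := ∑ i ∈ Finset.Icc k (j-1), D i with hC
  set T := ∑ i ∈ Finset.Icc (n+1) m, F i with hT
  set P : ℝ := ((j - k : ℕ) : ℝ) with hP
  set p : ℝ := ((n - j + 1 : ℕ) : ℝ) with hp
  set q : ℝ := ((m - n : ℕ) : ℝ) with hq
  have hPpos : 0 < P := by rw [hP]; exact_mod_cast Nat.sub_pos_of_lt hkj'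
  have hppos : 0 < p := by rw [hp]; positivity
  have hqpos : 0 < q := by rw [hq]; exact_mod_cast Nat.sub_pos_of_lt hmn
  have e1 : ((m - j + 1 : ℕ) : ℝ) = p + q := by
    rw [hp, hq, show m - j + 1 = (n - j + 1) + (m - n) by omega]; push_cast; ring
  have e2 : ((m - k + 1 : ℕ) : ℝ) = P + p + q := by
    rw [hP, hp, hq, show m - k + 1 = (j - k) + (n - j + 1) + (m - n) by omega]; push_cast; ring
  have e3 : ((n - k + 1 : ℕ) : ℝ) = P + p := by
    rw [hP, hp, show n - k + 1 = (j - k) + (n - j + 1) by omega]; push_cast; ring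
  have e4 : ((m - (n+1) + 1 : ℕ) : ℝ) = q := by
    rw [hq, show m - (n+1) + 1 = m - n by omega]
  rw [e1, e4] at h1
  rw [e1, e2] at h2
  rw [e3]
  rw [div_le_div_iff₀ hqpos (by linarith)] at h1
  rw [div_le_div_iff₀ (by linarith) (by linarith)] at h2
  rw [div_le_div_iff₀ (by linarith) hppos]
  nlinarith [mul_le_mul_of_nonneg_right h1 hPpos.le, mul_le_mul_of_nonneg_right h2 hppos.le,
    mul_pos hppos hqpos, mul_pos hPpos hqpos]
end

section
/- Let D be a real sequence of length n, and let 1 ≤ i, j ≤ n be two indices. Suppose a is a border of both the suffix D[i..n] and the suffix D[j..n] (in absolute index coordinates). Then for any b ≥ a, b is a border of D[i..n] if and only if b is a border of D[j..n]. -/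
/-- `a` (in absolute coordinates) is a border of the suffix `D[i..n]`: there are no
indices `x, y` with `i ≤ x < a ≤ y ≤ n` and `avg(D[x..a−1]) ≥ avg(D[a..y])`. -/
def IsBorderSuffix (D : ℕ → ℝ) (i n a : ℕ) : Prop :=
  i ≤ a ∧ a ≤ n ∧
    ¬ ∃ x y, i ≤ x ∧ x < a ∧ a ≤ y ∧ y ≤ n ∧ avg D x (a - 1) ≥ avg D a y

lemma avg_mediant (D : ℕ → ℝ) (x a b : ℕ) (hxa : x < a) (hab : a < b)
    (h : avg D x (a - 1) < avg D a (b - 1)) : avg D x (b - 1) < avg D a (b - 1) := by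
  have hsplit : ∑ i ∈ Finset.Icc x (b - 1), D i
      = (∑ i ∈ Finset.Icc x (a - 1), D i) + ∑ i ∈ Finset.Icc a (b - 1), D i := by
    have e1 : Finset.Icc x (b - 1) = Finset.Ico x b := by
      rw [← Finset.Ico_add_one_right_eq_Icc]; congr 1; omega
    have e2 : Finset.Icc x (a - 1) = Finset.Ico x a := by
      rw [← Finset.Ico_add_one_right_eq_Icc]; congr 1; omega
    have e3 : Finset.Icc a (b - 1) = Finset.Ico a b := by
      rw [← Finset.Ico_add_one_right_eq_Icc]; congr 1; omega
    rw [e1, e2, e3, Finset.sum_Ico_consecutive _ hxa.le hab.le]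
  unfold avg at *
  have ha1 : a - 1 - x + 1 = a - x := by omega
  have hb1 : b - 1 - a + 1 = b - a := by omega
  have hbx : b - 1 - x + 1 = (a - x) + (b - a) := by omega
  rw [ha1, hb1] at h
  rw [hb1, hbx, hsplit]
  set S1 := ∑ i ∈ Finset.Icc x (a - 1), D i
  set S2 := ∑ i ∈ Finset.Icc a (b - 1), D i
  have m1 : (0 : ℝ) < ((a - x : ℕ) : ℝ) := by exact_mod_cast Nat.pos_of_ne_zero (by omega)
  have m2 : (0 : ℝ) < ((b - a : ℕ) : ℝ) := by exact_mod_cast Nat.pos_of_ne_zero (by omega)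
  rw [div_lt_div_iff₀ m1 m2] at h
  rw [Nat.cast_add, div_lt_div_iff₀ (by linarith) m2]
  nlinarith

lemma border_step (D : ℕ → ℝ) (n i j a b : ℕ) (hia : i ≤ a)
    (haj : IsBorderSuffix D j n a) (hb : a ≤ b)
    (hbi : IsBorderSuffix D i n b) : IsBorderSuffix D j n b := by
  obtain ⟨hja, han, hnaj⟩ := haj
  obtain ⟨hib, hbn, hnbi⟩ := hbi
  refine ⟨hja.trans hb, hbn, ?_⟩
  rintro ⟨x, y, hjx, hxb, hby, hyn, hge⟩
  by_cases hxa : a ≤ x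
  · exact hnbi ⟨x, y, hia.trans hxa, hxb, hby, hyn, hge⟩
  · push_neg at hxa
    rcases hb.eq_or_lt with rfl | hab
    · exact hnaj ⟨x, y, hjx, hxa, hby, hyn, hge⟩
    · have h1 : avg D x (a - 1) < avg D a (b - 1) := by
        by_contra hc
        push_neg at hc
        exact hnaj ⟨x, b - 1, hjx, hxa, by omega, by omega, hc⟩
      have h2 : avg D x (b - 1) < avg D a (b - 1) := avg_mediant D x a b hxa hab h1
      exact hnbi ⟨a, y, hia, hab, hby, hyn, le_of_lt (lt_of_le_of_lt hge h2)⟩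

/-- If `a` is a border of both suffixes `D[i..n]` and `D[j..n]`, then for every
`b ≥ a`, `b` is a border of `D[i..n]` iff it is a border of `D[j..n]`. -/
theorem border_tail_agree (D : ℕ → ℝ) (n i j a : ℕ)
    (hi : 1 ≤ i) (hin : i ≤ n) (hj : 1 ≤ j) (hjn : j ≤ n)
    (hai : IsBorderSuffix D i n a) (haj : IsBorderSuffix D j n a) :
    ∀ b, a ≤ b → (IsBorderSuffix D i n b ↔ IsBorderSuffix D j n b) := by
  intro b hb
  exact ⟨fun h => border_step D n i j a b hai.1 haj hb h,
         fun h => border_step D n j i a b haj.1 hai hb h⟩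
end

section
/- Let D be a real sequence of length n and let 1 ≤ i ≤ j ≤ n. If a is the maximal border of D[i..n] and a ≥ j, then a is the maximal border of D[j..n]. -/
lemma mediant_lt (S1 S2 n1 n2 : ℝ) (h1 : 0 < n1) (h2 : 0 < n2)
    (hlt : S1 / n1 < S2 / n2) : (S1 + S2) / (n1 + n2) < S2 / n2 := by
  rw [div_lt_div_iff₀ h1 h2] at hlt
  rw [div_lt_div_iff₀ (by linarith) h2]
  nlinarith

/-- splitting the average over `[x, b-1]` at `a`. -/
lemma avg_split_lt (D : ℕ → ℝ) (x a b : ℕ) (hx : x < a) (hab : a < b)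
    (h : avg D x (a - 1) < avg D a (b - 1)) : avg D x (b - 1) < avg D a (b - 1) := by
  have ha1 : 1 ≤ a := by omega
  have hsum : ∑ i ∈ Finset.Icc x (b - 1), D i
      = (∑ i ∈ Finset.Icc x (a - 1), D i) + ∑ i ∈ Finset.Icc a (b - 1), D i := by
    have e1 : Finset.Icc x (a - 1) = Finset.Ico x a := by
      rw [← Finset.Ico_add_one_right_eq_Icc]; congr 1; omega
    have e2 : Finset.Icc a (b - 1) = Finset.Ico a b := by
      rw [← Finset.Ico_add_one_right_eq_Icc]; congr 1; omega
    have e3 : Finset.Icc x (b - 1) = Finset.Ico x b := by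
      rw [← Finset.Ico_add_one_right_eq_Icc]; congr 1; omega
    rw [e1, e2, e3, Finset.sum_Ico_consecutive _ (by omega) (by omega)]
  have hn1 : ((a - 1 : ℕ) - x + 1 : ℕ) = a - x := by omega
  have hn2 : ((b - 1 : ℕ) - a + 1 : ℕ) = b - a := by omega
  have hn3 : ((b - 1 : ℕ) - x + 1 : ℕ) = (a - x) + (b - a) := by omega
  unfold avg at *
  rw [hn1] at h
  rw [hn2] at h ⊢
  rw [hn3, hsum]
  push_cast
  exact mediant_lt _ _ _ _ (by exact_mod_cast Nat.sub_pos_of_lt hx)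
    (by exact_mod_cast Nat.sub_pos_of_lt hab) h

/-- If `a` is the maximal border of `D[i..n]` and `a ≥ j` (with `i ≤ j`), then `a`
is the maximal border of `D[j..n]`. -/
theorem maximal_border_of_later_suffix (D : ℕ → ℝ) (n i j a : ℕ)
    (hi : 1 ≤ i) (hij : i ≤ j) (hjn : j ≤ n)
    (ha : IsBorderSuffix D i n a) (hmax : ∀ b, IsBorderSuffix D i n b → b ≤ a)
    (hja : j ≤ a) :
    IsBorderSuffix D j n a ∧ ∀ b, IsBorderSuffix D j n b → b ≤ a := by
  obtain ⟨hia, han, hnoti⟩ := ha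
  refine ⟨⟨hja, han, ?_⟩, ?_⟩
  · rintro ⟨x, y, hx, hxa, hay, hyn, hav⟩
    exact hnoti ⟨x, y, hij.trans hx, hxa, hay, hyn, hav⟩
  · intro b hb
    by_contra hcon
    push_neg at hcon
    obtain ⟨hjb, hbn, hnotb⟩ := hb
    have hnb : ¬ IsBorderSuffix D i n b := fun hB => absurd (hmax b hB) (not_le.mpr hcon)
    have hex : ∃ x y, i ≤ x ∧ x < b ∧ b ≤ y ∧ y ≤ n ∧ avg D x (b - 1) ≥ avg D b y := by
      by_contra hne
      exact hnb ⟨hia.trans hcon.le, hbn, hne⟩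
    obtain ⟨x, y, hix, hxb, hby, hyn, hav⟩ := hex
    have hxj : x < j := by
      by_contra hxj
      push_neg at hxj
      exact hnotb ⟨x, y, hxj, hxb, hby, hyn, hav⟩
    have hxa : x < a := lt_of_lt_of_le hxj hja
    have hA : avg D x (a - 1) < avg D a (b - 1) := by
      by_contra hA
      push_neg at hA
      exact hnoti ⟨x, b - 1, hix, hxa, by omega, by omega, hA⟩
    have hB : avg D a (b - 1) < avg D b y := by
      by_contra hB
      push_neg at hB
      exact hnotb ⟨a, y, hja, hcon, hby, hyn, hB⟩
    have hC := avg_split_lt D x a b hxa hcon hA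
    linarith [hav, hC, hB]
end

section
/- Let D be a real sequence of length n and let c be an index. Let a be the maximal border of the suffix D[c..n]. Then for every b with c ≤ b ≤ n, avg(D[a..n]) ≥ avg(D[b..n]). -/
lemma len_pos {u v : ℕ} : (0:ℝ) < ((v - u + 1 : ℕ) : ℝ) := by
  exact_mod_cast Nat.succ_pos _

lemma sum_split (D : ℕ → ℝ) {u v w : ℕ} (h1 : u ≤ v + 1) (h2 : v ≤ w) :
    ∑ i ∈ Finset.Icc u w, D i
      = (∑ i ∈ Finset.Icc u v, D i) + ∑ i ∈ Finset.Icc (v+1) w, D i := by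
  rw [← Finset.Ico_add_one_right_eq_Icc, ← Finset.Ico_add_one_right_eq_Icc u v, ← Finset.Ico_add_one_right_eq_Icc (v+1) w,
    Finset.sum_Ico_consecutive _ h1 (by omega)]

lemma len_split {u v w : ℕ} (h1 : u ≤ v) (h2 : v < w) :
    ((w - u + 1 : ℕ) : ℝ) = ((v - u + 1 : ℕ) : ℝ) + ((w - (v+1) + 1 : ℕ) : ℝ) := by
  have : (w - u + 1 : ℕ) = (v - u + 1) + (w - (v+1) + 1) := by omega
  exact_mod_cast congrArg (Nat.cast : ℕ → ℝ) this

lemma avg_combine_le (D : ℕ → ℝ) {u v w : ℕ} (h1 : u ≤ v) (h2 : v < w) {t : ℝ}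
    (hl : avg D u v ≤ t) (hr : avg D (v+1) w ≤ t) : avg D u w ≤ t := by
  have L1 : (0:ℝ) < ((v - u + 1 : ℕ) : ℝ) := len_pos
  have L2 : (0:ℝ) < ((w - (v+1) + 1 : ℕ) : ℝ) := len_pos
  rw [avg, div_le_iff₀ len_pos] at hl hr ⊢
  rw [sum_split D (u := u) (v := v) (w := w) (by omega) (by omega), len_split h1 h2]
  nlinarith

lemma avg_combine_ge (D : ℕ → ℝ) {u v w : ℕ} (h1 : u ≤ v) (h2 : v < w) {t : ℝ}
    (hl : t ≤ avg D u v) (hr : t ≤ avg D (v+1) w) : t ≤ avg D u w := by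
  have L1 : (0:ℝ) < ((v - u + 1 : ℕ) : ℝ) := len_pos
  have L2 : (0:ℝ) < ((w - (v+1) + 1 : ℕ) : ℝ) := len_pos
  rw [avg, le_div_iff₀ len_pos] at hl hr ⊢
  rw [sum_split D (u := u) (v := v) (w := w) (by omega) (by omega), len_split h1 h2]
  nlinarith

lemma avg_extract_left (D : ℕ → ℝ) {u v w : ℕ} (h1 : u ≤ v) (h2 : v < w) {t : ℝ}
    (hw : t ≤ avg D u w) (hr : avg D (v+1) w ≤ t) : t ≤ avg D u v := by
  have L1 : (0:ℝ) < ((v - u + 1 : ℕ) : ℝ) := len_pos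
  have L2 : (0:ℝ) < ((w - (v+1) + 1 : ℕ) : ℝ) := len_pos
  rw [avg, le_div_iff₀ len_pos] at hw ⊢
  rw [avg, div_le_iff₀ len_pos] at hr
  rw [sum_split D (u := u) (v := v) (w := w) (by omega) (by omega), len_split h1 h2] at hw
  nlinarith

/-- If `a` is the maximal border of the suffix `D[c..n]`, then the suffix average
starting at `a` dominates every suffix average starting at `b` with `c ≤ b ≤ n`. -/
theorem maximal_border_max_suffix_avg (D : ℕ → ℝ) (n c a : ℕ)
    (hc : 1 ≤ c) (hcn : c ≤ n)
    (ha : IsBorderSuffix D c n a) (hmax : ∀ b, IsBorderSuffix D c n b → b ≤ a) :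
    ∀ b, c ≤ b → b ≤ n → avg D b n ≤ avg D a n := by
  obtain ⟨a₀, ha₀F, ha₀max⟩ :=
    Finset.exists_max_image (Finset.Icc c n) (fun b => avg D b n) ⟨c, by simp [hcn]⟩
  set P : ℕ → Prop := fun b =>
    c ≤ b ∧ b ≤ n ∧ ∀ b', c ≤ b' → b' ≤ n → avg D b' n ≤ avg D b n with hP
  have hPa₀ : P a₀ := by
    simp only [Finset.mem_Icc] at ha₀F
    exact ⟨ha₀F.1, ha₀F.2, fun b' h1 h2 => ha₀max b' (Finset.mem_Icc.mpr ⟨h1, h2⟩)⟩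
  set a₁ := sInf {b | P b} with ha₁def
  have ha₁ : a₁ ∈ {b | P b} := Nat.sInf_mem (⟨a₀, hPa₀⟩ : Set.Nonempty {b | P b})
  have ha₁min : ∀ b, P b → a₁ ≤ b := fun b hb => Nat.sInf_le (hb : b ∈ {b | P b})
  obtain ⟨hca₁, ha₁n, hmaxavg⟩ := ha₁
  -- Step 1: every prefix of the suffix starting at a₁ has avg ≥ avg D a₁ n
  have prefix_ge : ∀ y, a₁ ≤ y → y ≤ n → avg D a₁ n ≤ avg D a₁ y := by
    intro y hy1 hy2
    rcases eq_or_lt_of_le hy2 with rfl | hy2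
    · exact le_refl _
    · exact avg_extract_left D hy1 hy2 (le_refl _)
        (hmaxavg (y+1) (by omega) (by omega))
  -- Step 2: a₁ is a border
  have hborder : IsBorderSuffix D c n a₁ := by
    refine ⟨hca₁, ha₁n, ?_⟩
    rintro ⟨x, y, hx, hxa, hay, hyn, hge⟩
    have h1 : avg D a₁ n ≤ avg D a₁ y := prefix_ge y hay hyn
    have h2 : avg D a₁ n ≤ avg D x (a₁ - 1) := le_trans h1 hge
    have h3 : avg D a₁ n ≤ avg D x n := by
      have e : a₁ - 1 + 1 = a₁ := by omega
      have := avg_combine_ge D (u := x) (v := a₁ - 1) (w := n)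
        (by omega) (by omega) h2 (by rw [e])
      exact this
    have h4 : avg D x n ≤ avg D a₁ n := hmaxavg x hx (by omega)
    have hPx : P x := ⟨hx, by omega, fun b' h1' h2' =>
      le_trans (hmaxavg b' h1' h2') (le_antisymm h4 h3).ge⟩
    exact absurd (ha₁min x hPx) (by omega)
  -- Step 3: a₁ ≤ a
  have ha₁a : a₁ ≤ a := hmax a₁ hborder
  obtain ⟨hca, han, hanb⟩ := ha
  -- Step 4: avg D a₁ n ≤ avg D a n
  have key : avg D a₁ n ≤ avg D a n := by
    rcases eq_or_lt_of_le ha₁a with rfl | hlt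
    · exact le_refl _
    · have hne : ¬ (avg D a₁ (a - 1) ≥ avg D a n) := fun h =>
        hanb ⟨a₁, n, hca₁, hlt, han, le_refl n, h⟩
      have e : a - 1 + 1 = a := by omega
      exact avg_combine_le D (u := a₁) (v := a - 1) (w := n)
        (by omega) (by omega) (le_of_not_ge hne) (by rw [e])
  intro b hb1 hb2
  exact le_trans (hmaxavg b hb1 hb2) key
end
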